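/- arXiv:1304.3931 — 3 statements merged into one kernel-verified Lean document; each statement's English description precedes it below -/
import Mathlib

section
/- There do not exist 2×2 Hermitian positive semidefinite complex matrices M₁₁, M₁₂, M₂₁, M₂₂ such that M₁₁ + M₁₂ = (1/2)·[[1,0],[0,0]], M₂₁ + M₂₂ = (1/2)·[[0,0],[0,1]], M₁₁ + M₂₁ = (1/4)·[[1,−1],[−1,1]], and M₁₂ + M₂₂ = (1/4)·[[1,1],[1,1]]. (Hence the naive matrix-valued joint-density marginal constraint, requiring an n×n positive semidefinite joint density whose partial integrals equal the two given matrix-valued marginals, is in general infeasible.) -/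
open Matrix ComplexOrder

/-!
The two row marginals have a zero entry at positions `(1,1)` and `(0,0)` respectively, so by
positivity of the diagonals `M11 1 1 = 0` and `M21 0 0 = 0`. A positive semidefinite matrix with a
zero diagonal entry has the whole corresponding row and column zero, so `(M11 + M21) 0 1 = 0`,
whereas the first column marginal requires `-1/4` there.
-/

namespace Matrix.PosSemidef

variable {𝕜 n : Type*} [RCLike 𝕜] {A B : Matrix n n 𝕜}

theorem diag_eq_zero_of_add_diag_eq_zero (hA : A.PosSemidef) (hB : B.PosSemidef) {i : n}
    (h : (A + B) i i = 0) : A i i = 0 :=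
  ((add_eq_zero_iff_of_nonneg hA.diag_nonneg hB.diag_nonneg).mp h).1

variable [Fintype n]

theorem col_eq_zero_of_diag_eq_zero (hA : A.PosSemidef) {i : n} (hi : A i i = 0) (j : n) :
    A j i = 0 := by
  classical
  have hquad : star (Pi.single i 1) ⬝ᵥ A *ᵥ Pi.single i 1 = 0 := by
    simpa [mulVec_single_one] using hi
  have hcol := congrFun ((hA.dotProduct_mulVec_zero_iff _).mp hquad) j
  simpa [mulVec_single_one] using hcol

theorem row_eq_zero_of_diag_eq_zero (hA : A.PosSemidef) {i : n} (hi : A i i = 0) (j : n) :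
    A i j = 0 := by
  simpa [hA.col_eq_zero_of_diag_eq_zero hi j] using (hA.isHermitian.apply i j).symm

end Matrix.PosSemidef

theorem naive_joint_density_infeasible :
    ¬ ∃ M11 M12 M21 M22 : Matrix (Fin 2) (Fin 2) ℂ,
      M11.PosSemidef ∧ M12.PosSemidef ∧ M21.PosSemidef ∧ M22.PosSemidef ∧
      M11 + M12 = (1/2 : ℂ) • !![1, 0; 0, 0] ∧
      M21 + M22 = (1/2 : ℂ) • !![0, 0; 0, 1] ∧
      M11 + M21 = (1/4 : ℂ) • !![1, -1; -1, 1] ∧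
      M12 + M22 = (1/4 : ℂ) • !![1, 1; 1, 1] := by
  rintro ⟨M11, M12, M21, M22, h11, h12, h21, h22, hrow1, hrow2, hcol1, -⟩
  have hM11 : M11 1 1 = 0 :=
    h11.diag_eq_zero_of_add_diag_eq_zero h12 (by simpa using congrFun₂ hrow1 1 1)
  have hM21 : M21 0 0 = 0 :=
    h21.diag_eq_zero_of_add_diag_eq_zero h22 (by simpa using congrFun₂ hrow2 0 0)
  have hoff := congrFun₂ hcol1 0 1
  rw [Matrix.add_apply, h11.col_eq_zero_of_diag_eq_zero hM11,
    h21.row_eq_zero_of_diag_eq_zero hM21] at hoff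
  norm_num at hoff
end

section
/- Let A₁, A₂, B₁, B₂ be n×n Hermitian positive semidefinite complex matrices with tr(A₁) = tr(A₂) = tr(B₁) = tr(B₂) = 1, let λ > 0 and let x₁, x₂, y₁, y₂ ∈ ℝ satisfy (x₂ − x₁)(y₁ − y₂) > 2λ. Then (y₁ − x₁)² + (y₂ − x₂)² + λ‖A₁ − B₁‖_F² + λ‖A₂ − B₂‖_F² > (y₂ − x₁)² + (y₁ − x₂)² + λ‖A₁ − B₂‖_F² + λ‖A₂ − B₁‖_F². -/
open Matrix ComplexOrder

/-- The squared Frobenius norm of a complex matrix. -/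
noncomputable def frobSq {n : ℕ} (M : Matrix (Fin n) (Fin n) ℂ) : ℝ :=
  ∑ i, ∑ j, ‖M i j‖ ^ 2

/-!
Expanding the squares, the left side exceeds the right side by
`2 (x₂ - x₁) (y₁ - y₂) - 2λ Re tr ((A₁ - A₂)ᴴ (B₁ - B₂))`. For positive semidefinite `A = CᴴC` and
`B = DᴴD` one has `tr (A B) = ‖C Dᴴ‖_F²`, which lies between `0` and
`‖C‖_F² ‖D‖_F² = tr A · tr B`. Hence the cross term is at most `tr (A₁ B₁) + tr (A₂ B₂) ≤ 2`,
while `(x₂ - x₁) (y₁ - y₂) > 2λ`.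
-/

open scoped Matrix.Norms.Frobenius MatrixOrder

namespace Matrix

variable {𝕜 m n : Type*} [RCLike 𝕜] [Fintype m] [Fintype n]

theorem frobenius_norm_sq (A : Matrix m n 𝕜) : ‖A‖ ^ 2 = ∑ i, ∑ j, ‖A i j‖ ^ 2 := by
  change ‖WithLp.toLp 2 fun i => WithLp.toLp 2 fun j => A i j‖ ^ 2 = _
  simp [PiLp.norm_sq_eq_of_L2]

theorem trace_conjTranspose_mul_self_eq_frobenius_norm_sq (A : Matrix m n 𝕜) :
    (Aᴴ * A).trace = ((‖A‖ ^ 2 : ℝ) : 𝕜) := by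
  rw [frobenius_norm_sq, Finset.sum_comm]
  simp [trace, mul_apply, RCLike.conj_mul]

theorem re_trace_conjTranspose_mul_comm (A B : Matrix m n 𝕜) :
    RCLike.re (Bᴴ * A).trace = RCLike.re (Aᴴ * B).trace := by
  conv_lhs => rw [← conjTranspose_conjTranspose A, ← conjTranspose_mul, trace_conjTranspose]
  exact RCLike.conj_re _

theorem trace_star_mul_self_mul_star_mul_self (C D : Matrix n n 𝕜) :
    (star C * C * (star D * D)).trace = ((‖C * Dᴴ‖ ^ 2 : ℝ) : 𝕜) := by
  rw [← trace_conjTranspose_mul_self_eq_frobenius_norm_sq, conjTranspose_mul,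
    conjTranspose_conjTranspose, star_eq_conjTranspose, star_eq_conjTranspose, ← mul_assoc,
    trace_mul_comm, ← mul_assoc, ← mul_assoc, mul_assoc _ C]

namespace PosSemidef

variable {A B : Matrix n n 𝕜}

theorem trace_mul_nonneg (hA : A.PosSemidef) (hB : B.PosSemidef) : 0 ≤ (A * B).trace := by
  classical
  obtain ⟨C, rfl⟩ := CStarAlgebra.nonneg_iff_eq_star_mul_self.mp hA.nonneg
  obtain ⟨D, rfl⟩ := CStarAlgebra.nonneg_iff_eq_star_mul_self.mp hB.nonneg
  rw [trace_star_mul_self_mul_star_mul_self]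
  exact RCLike.ofReal_nonneg.mpr (sq_nonneg _)

theorem trace_mul_le_trace_mul_trace (hA : A.PosSemidef) (hB : B.PosSemidef) :
    (A * B).trace ≤ A.trace * B.trace := by
  classical
  obtain ⟨C, rfl⟩ := CStarAlgebra.nonneg_iff_eq_star_mul_self.mp hA.nonneg
  obtain ⟨D, rfl⟩ := CStarAlgebra.nonneg_iff_eq_star_mul_self.mp hB.nonneg
  rw [trace_star_mul_self_mul_star_mul_self, star_eq_conjTranspose, star_eq_conjTranspose,
    trace_conjTranspose_mul_self_eq_frobenius_norm_sq,
    trace_conjTranspose_mul_self_eq_frobenius_norm_sq, ← RCLike.ofReal_mul,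
    RCLike.ofReal_le_ofReal, ← mul_pow, ← frobenius_norm_conjTranspose D]
  gcongr
  exact frobenius_norm_mul C Dᴴ

theorem trace_sub_mul_sub_le {A₁ A₂ B₁ B₂ : Matrix n n 𝕜}
    (hA₁ : A₁.PosSemidef) (hA₂ : A₂.PosSemidef) (hB₁ : B₁.PosSemidef) (hB₂ : B₂.PosSemidef) :
    ((A₁ - A₂) * (B₁ - B₂)).trace ≤ A₁.trace * B₁.trace + A₂.trace * B₂.trace :=
  calc ((A₁ - A₂) * (B₁ - B₂)).trace
      = (A₁ * B₁).trace + (A₂ * B₂).trace - ((A₁ * B₂).trace + (A₂ * B₁).trace) := by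
        simp only [sub_mul, mul_sub, trace_sub]
        abel
    _ ≤ (A₁ * B₁).trace + (A₂ * B₂).trace :=
        sub_le_self _ (add_nonneg (hA₁.trace_mul_nonneg hB₂) (hA₂.trace_mul_nonneg hB₁))
    _ ≤ A₁.trace * B₁.trace + A₂.trace * B₂.trace :=
        add_le_add (hA₁.trace_mul_le_trace_mul_trace hB₁) (hA₂.trace_mul_le_trace_mul_trace hB₂)

end PosSemidef

end Matrix

theorem frobSq_eq_re_trace {n : ℕ} (M : Matrix (Fin n) (Fin n) ℂ) :
    frobSq M = (Mᴴ * M).trace.re := by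
  rw [trace_conjTranspose_mul_self_eq_frobenius_norm_sq, frobenius_norm_sq]
  exact (RCLike.ofReal_re (K := ℂ) _).symm

theorem frobSq_sub {n : ℕ} (A B : Matrix (Fin n) (Fin n) ℂ) :
    frobSq (A - B) = frobSq A + frobSq B - 2 * (Aᴴ * B).trace.re := by
  have hsymm : (Bᴴ * A).trace.re = (Aᴴ * B).trace.re := re_trace_conjTranspose_mul_comm A B
  simp only [frobSq_eq_re_trace, conjTranspose_sub, sub_mul, mul_sub, trace_sub, Complex.sub_re,
    hsymm]
  ring

theorem frobSq_exchange {n : ℕ} (A₁ A₂ B₁ B₂ : Matrix (Fin n) (Fin n) ℂ) :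
    frobSq (A₁ - B₂) + frobSq (A₂ - B₁) =
      frobSq (A₁ - B₁) + frobSq (A₂ - B₂) + 2 * ((A₁ - A₂)ᴴ * (B₁ - B₂)).trace.re := by
  simp only [frobSq_sub, conjTranspose_sub, sub_mul, mul_sub, trace_sub, Complex.sub_re]
  ring

theorem exchange_inequality {n : ℕ}
    (A₁ A₂ B₁ B₂ : Matrix (Fin n) (Fin n) ℂ)
    (hA₁ : A₁.PosSemidef) (hA₂ : A₂.PosSemidef)
    (hB₁ : B₁.PosSemidef) (hB₂ : B₂.PosSemidef)
    (hA₁tr : A₁.trace = 1) (hA₂tr : A₂.trace = 1)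
    (hB₁tr : B₁.trace = 1) (hB₂tr : B₂.trace = 1)
    (lam : ℝ) (hlam : 0 < lam)
    (x₁ x₂ y₁ y₂ : ℝ) (h : (x₂ - x₁) * (y₁ - y₂) > 2 * lam) :
    (y₁ - x₁) ^ 2 + (y₂ - x₂) ^ 2 + lam * frobSq (A₁ - B₁) + lam * frobSq (A₂ - B₂) >
      (y₂ - x₁) ^ 2 + (y₁ - x₂) ^ 2 + lam * frobSq (A₁ - B₂) + lam * frobSq (A₂ - B₁) := by
  have hcross : ((A₁ - A₂)ᴴ * (B₁ - B₂)).trace.re ≤ 2 := by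
    have hle := PosSemidef.trace_sub_mul_sub_le hA₁ hA₂ hB₁ hB₂
    rw [hA₁tr, hA₂tr, hB₁tr, hB₂tr] at hle
    rw [(hA₁.isHermitian.sub hA₂.isHermitian).eq]
    simpa [one_add_one_eq_two] using (Complex.le_def.mp hle).1
  have hexchange := frobSq_exchange A₁ A₂ B₁ B₂
  have hscaled := mul_le_mul_of_nonneg_left hcross hlam.le
  linear_combination 2 * h + 2 * hscaled + lam * hexchange
end

section
/- Let λ > 0, x₁, x₂, y₁, y₂ ∈ ℝ with (x₂ − x₁)(y₁ − y₂) > 4λ, let m₁₁ > 0, m₂₂ ≥ m₁₁, m₁₂ ≥ 0, m₂₁ ≥ 0, and let A_{ij}, B_{ij} (i,j ∈ {1,2}) be n×n Hermitian positive semidefinite matrices with trace 1. Define Ã₁₂ = (m₁₁A₁₁ + m₁₂A₁₂)/(m₁₁+m₁₂), B̃₁₂ = (m₁₁B₂₂ + m₁₂B₁₂)/(m₁₁+m₁₂), Ã₂₁ = (m₁₁A₂₂ + m₂₁A₂₁)/(m₁₁+m₂₁), B̃₂₁ = (m₁₁B₁₁ + m₂₁B₂₁)/(m₁₁+m₂₁).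 Then: (a) the rearranged plan preserves marginals, i.e. (m₁₁+m₁₂)Ã₁₂ = m₁₁A₁₁ + m₁₂A₁₂, (m₁₁+m₂₁)Ã₂₁ = m₁₁A₂₂ + m₂₁A₂₁, (m₁₁+m₂₁)B̃₂₁ = m₁₁B₁₁ + m₂₁B₂₁, and (m₁₁+m₁₂)B̃₁₂ + (m₂₂−m₁₁)B₂₂ = m₁₂B₁₂ + m₂₂B₂₂; and (b) the cost strictly decreases: Σ_{i,j∈{1,2}} m_{ij}((x_i − y_j)² + λ‖A_{ij} − B_{ij}‖_F²) > (m₁₁+m₁₂)((x₁−y₂)² + λ‖Ã₁₂ − B̃₁₂‖_F²) + (m₁₁+m₂₁)((x₂−y₁)² + λ‖Ã₂₁ − B̃₂₁‖_F²) + (m₂₂−m₁₁)((x₂−y₂)² + λ‖A₂₂ − B₂₂‖_F²). -/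
open Matrix ComplexOrder

theorem frobSq_nonneg {n : ℕ} (M : Matrix (Fin n) (Fin n) ℂ) : 0 ≤ frobSq M := by
  unfold frobSq; positivity

theorem Matrix.PosSemidef.norm_apply_sq_le {𝕜 ι : Type*} [RCLike 𝕜] [Fintype ι] [DecidableEq ι]
    {A : Matrix ι ι 𝕜} (hA : A.PosSemidef) (i j : ι) :
    ‖A i j‖ ^ 2 ≤ RCLike.re (A i i) * RCLike.re (A j j) := by
  -- Cauchy–Schwarz for the semi-inner product `⟪x, y⟫ = xᴴ A y`, on basis vectors.
  let _ := A.toSeminormedAddCommGroup hA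
  let _ := A.toInnerProductSpace hA
  have inner_single : ∀ a b, inner 𝕜 (Pi.single a 1 : ι → 𝕜) (Pi.single b 1) = A a b := by
    intro a b
    change (A *ᵥ Pi.single b 1) ⬝ᵥ star (Pi.single a 1) = A a b
    simp
  have := inner_mul_inner_self_le (𝕜 := 𝕜) (Pi.single i 1 : ι → 𝕜) (Pi.single j 1)
  rwa [inner_single, inner_single, inner_single, inner_single, ← hA.isHermitian.apply j i,
    norm_star, ← sq] at this

theorem Matrix.PosSemidef.sum_norm_apply_sq_le {𝕜 ι : Type*} [RCLike 𝕜] [Fintype ι] [DecidableEq ι]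
    {A : Matrix ι ι 𝕜} (hA : A.PosSemidef) :
    ∑ i, ∑ j, ‖A i j‖ ^ 2 ≤ RCLike.re A.trace ^ 2 := by
  calc ∑ i, ∑ j, ‖A i j‖ ^ 2 ≤ ∑ i, ∑ j, RCLike.re (A i i) * RCLike.re (A j j) :=
        Finset.sum_le_sum fun i _ => Finset.sum_le_sum fun j _ => hA.norm_apply_sq_le i j
    _ = RCLike.re A.trace ^ 2 := by
        simp only [sq, Matrix.trace, Matrix.diag, map_sum, Finset.sum_mul_sum]

section Frobenius

attribute [local instance] Matrix.frobeniusNormedAddCommGroup Matrix.frobeniusNormedSpace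

theorem frobSq_eq_norm_sq {n : ℕ} (M : Matrix (Fin n) (Fin n) ℂ) : frobSq M = ‖M‖ ^ 2 := by
  rw [frobenius_norm_def, ← Real.sqrt_eq_rpow, Real.sq_sqrt (by positivity)]
  simp [frobSq]

theorem add_mul_norm_sq_inv_smul_le {E : Type*} [SeminormedAddCommGroup E] [NormedSpace ℝ E]
    {a b : ℝ} (ha : 0 ≤ a) (hb : 0 ≤ b) (u v : E) :
    (a + b) * ‖(a + b)⁻¹ • (a • u + b • v)‖ ^ 2 ≤ a * ‖u‖ ^ 2 + b * ‖v‖ ^ 2 := by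
  rcases (add_nonneg ha hb).eq_or_lt with hab | hab
  · rw [← hab, zero_mul]; positivity
  have hnorm : ‖a • u + b • v‖ ≤ a * ‖u‖ + b * ‖v‖ := by
    refine (norm_add_le _ _).trans_eq ?_
    rw [norm_smul_of_nonneg ha, norm_smul_of_nonneg hb]
  calc (a + b) * ‖(a + b)⁻¹ • (a • u + b • v)‖ ^ 2 = ‖a • u + b • v‖ ^ 2 / (a + b) := by
        rw [norm_smul_of_nonneg (inv_nonneg.2 hab.le)]; field_simp
    _ ≤ (a * ‖u‖ + b * ‖v‖) ^ 2 / (a + b) := by gcongr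
    _ ≤ a * ‖u‖ ^ 2 + b * ‖v‖ ^ 2 := by
        -- `(a + b) (a s² + b t²) - (a s + b t)² = a b (s - t)²` with `s = ‖u‖`, `t = ‖v‖`
        rw [div_le_iff₀ hab]; nlinarith [mul_nonneg ha hb, sq_nonneg (‖u‖ - ‖v‖)]

theorem norm_le_one_of_posSemidef_of_trace_eq_one {n : ℕ} {A : Matrix (Fin n) (Fin n) ℂ}
    (hA : A.PosSemidef) (hAt : A.trace = 1) : ‖A‖ ≤ 1 := by
  have h : frobSq A ≤ 1 := by simpa [frobSq, hAt] using hA.sum_norm_apply_sq_le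
  rw [frobSq_eq_norm_sq] at h
  exact (sq_le_one_iff₀ (norm_nonneg A)).1 h

theorem frobSq_sub_le_four {n : ℕ} {A B : Matrix (Fin n) (Fin n) ℂ}
    (hA : A.PosSemidef) (hB : B.PosSemidef) (hAt : A.trace = 1) (hBt : B.trace = 1) :
    frobSq (A - B) ≤ 4 := by
  have hAB : ‖A - B‖ ≤ 2 := by
    linarith [norm_sub_le A B, norm_le_one_of_posSemidef_of_trace_eq_one hA hAt,
      norm_le_one_of_posSemidef_of_trace_eq_one hB hBt]
  rw [frobSq_eq_norm_sq]
  nlinarith [norm_nonneg (A - B)]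

theorem add_mul_frobSq_inv_smul_le {n : ℕ} {a b : ℝ} (ha : 0 ≤ a) (hb : 0 ≤ b)
    (M N : Matrix (Fin n) (Fin n) ℂ) :
    (a + b) * frobSq ((a + b)⁻¹ • (a • M + b • N)) ≤ a * frobSq M + b * frobSq N := by
  simpa only [frobSq_eq_norm_sq] using add_mul_norm_sq_inv_smul_le ha hb M N

end Frobenius

theorem matrix_rearrangement_reduces_cost_general {n : ℕ}
    (lam : ℝ) (hlam : 0 < lam)
    (x₁ x₂ y₁ y₂ : ℝ) (h : (x₂ - x₁) * (y₁ - y₂) > 4 * lam)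
    (m₁₁ m₁₂ m₂₁ m₂₂ : ℝ)
    (hm₁₁ : 0 < m₁₁) (hm₁₂ : 0 ≤ m₁₂) (hm₂₁ : 0 ≤ m₂₁)
    (A₁₁ A₁₂ A₂₁ A₂₂ B₁₁ B₁₂ B₂₁ B₂₂ : Matrix (Fin n) (Fin n) ℂ)
    (hA₁₁ : A₁₁.PosSemidef)
    (hA₂₂ : A₂₂.PosSemidef)
    (hB₁₁ : B₁₁.PosSemidef)
    (hB₂₂ : B₂₂.PosSemidef)
    (hA₁₁t : A₁₁.trace = 1)
    (hA₂₂t : A₂₂.trace = 1)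
    (hB₁₁t : B₁₁.trace = 1)
    (hB₂₂t : B₂₂.trace = 1)
    (tA₁₂ tB₁₂ tA₂₁ tB₂₁ : Matrix (Fin n) (Fin n) ℂ)
    (htA₁₂ : tA₁₂ = ((m₁₁ + m₁₂)⁻¹ : ℝ) • (m₁₁ • A₁₁ + m₁₂ • A₁₂))
    (htB₁₂ : tB₁₂ = ((m₁₁ + m₁₂)⁻¹ : ℝ) • (m₁₁ • B₂₂ + m₁₂ • B₁₂))
    (htA₂₁ : tA₂₁ = ((m₁₁ + m₂₁)⁻¹ : ℝ) • (m₁₁ • A₂₂ + m₂₁ • A₂₁))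
    (htB₂₁ : tB₂₁ = ((m₁₁ + m₂₁)⁻¹ : ℝ) • (m₁₁ • B₁₁ + m₂₁ • B₂₁)) :
    ((m₁₁ + m₁₂) • tA₁₂ = m₁₁ • A₁₁ + m₁₂ • A₁₂ ∧
     (m₁₁ + m₂₁) • tA₂₁ = m₁₁ • A₂₂ + m₂₁ • A₂₁ ∧
     (m₁₁ + m₂₁) • tB₂₁ = m₁₁ • B₁₁ + m₂₁ • B₂₁ ∧
     (m₁₁ + m₁₂) • tB₁₂ + (m₂₂ - m₁₁) • B₂₂ = m₁₂ • B₁₂ + m₂₂ • B₂₂) ∧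
    (m₁₁ * ((x₁ - y₁) ^ 2 + lam * frobSq (A₁₁ - B₁₁)) +
       m₁₂ * ((x₁ - y₂) ^ 2 + lam * frobSq (A₁₂ - B₁₂)) +
       m₂₁ * ((x₂ - y₁) ^ 2 + lam * frobSq (A₂₁ - B₂₁)) +
       m₂₂ * ((x₂ - y₂) ^ 2 + lam * frobSq (A₂₂ - B₂₂)) >
     (m₁₁ + m₁₂) * ((x₁ - y₂) ^ 2 + lam * frobSq (tA₁₂ - tB₁₂)) +
       (m₁₁ + m₂₁) * ((x₂ - y₁) ^ 2 + lam * frobSq (tA₂₁ - tB₂₁)) +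
       (m₂₂ - m₁₁) * ((x₂ - y₂) ^ 2 + lam * frobSq (A₂₂ - B₂₂))) := by
  have hm₁₂' : m₁₁ + m₁₂ ≠ 0 := (add_pos_of_pos_of_nonneg hm₁₁ hm₁₂).ne'
  have hm₂₁' : m₁₁ + m₂₁ ≠ 0 := (add_pos_of_pos_of_nonneg hm₁₁ hm₂₁).ne'
  refine ⟨⟨?_, ?_, ?_, ?_⟩, ?_⟩
  · rw [htA₁₂, smul_inv_smul₀ hm₁₂']
  · rw [htA₂₁, smul_inv_smul₀ hm₂₁']
  · rw [htB₂₁, smul_inv_smul₀ hm₂₁']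
  · rw [htB₁₂, smul_inv_smul₀ hm₁₂']; module
  have hd₁₂ : tA₁₂ - tB₁₂ = (m₁₁ + m₁₂)⁻¹ • (m₁₁ • (A₁₁ - B₂₂) + m₁₂ • (A₁₂ - B₁₂)) := by
    rw [htA₁₂, htB₁₂]; module
  have hd₂₁ : tA₂₁ - tB₂₁ = (m₁₁ + m₂₁)⁻¹ • (m₁₁ • (A₂₂ - B₁₁) + m₂₁ • (A₂₁ - B₂₁)) := by
    rw [htA₂₁, htB₂₁]; module
  have h₁₂ := add_mul_frobSq_inv_smul_le hm₁₁.le hm₁₂ (A₁₁ - B₂₂) (A₁₂ - B₁₂)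
  have h₂₁ := add_mul_frobSq_inv_smul_le hm₁₁.le hm₂₁ (A₂₂ - B₁₁) (A₂₁ - B₂₁)
  have hswap : lam * (frobSq (A₁₁ - B₂₂) + frobSq (A₂₂ - B₁₁)) < 2 * ((x₂ - x₁) * (y₁ - y₂)) := by
    have := add_le_add (frobSq_sub_le_four hA₁₁ hB₂₂ hA₁₁t hB₂₂t)
      (frobSq_sub_le_four hA₂₂ hB₁₁ hA₂₂t hB₁₁t)
    nlinarith
  have hdiag : 0 ≤ m₁₁ * lam * (frobSq (A₁₁ - B₁₁) + frobSq (A₂₂ - B₂₂)) := by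
    have := frobSq_nonneg (A₁₁ - B₁₁); have := frobSq_nonneg (A₂₂ - B₂₂); positivity
  rw [hd₁₂, hd₂₁]
  linarith [mul_lt_mul_of_pos_left hswap hm₁₁, mul_le_mul_of_nonneg_left h₁₂ hlam.le,
    mul_le_mul_of_nonneg_left h₂₁ hlam.le]

theorem matrix_rearrangement_reduces_cost {n : ℕ}
    (lam : ℝ) (hlam : 0 < lam)
    (x₁ x₂ y₁ y₂ : ℝ) (h : (x₂ - x₁) * (y₁ - y₂) > 4 * lam)
    (m₁₁ m₁₂ m₂₁ m₂₂ : ℝ)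
    (hm₁₁ : 0 < m₁₁) (hm₂₂ : m₁₁ ≤ m₂₂) (hm₁₂ : 0 ≤ m₁₂) (hm₂₁ : 0 ≤ m₂₁)
    (A₁₁ A₁₂ A₂₁ A₂₂ B₁₁ B₁₂ B₂₁ B₂₂ : Matrix (Fin n) (Fin n) ℂ)
    (hA₁₁ : A₁₁.PosSemidef) (hA₁₂ : A₁₂.PosSemidef)
    (hA₂₁ : A₂₁.PosSemidef) (hA₂₂ : A₂₂.PosSemidef)
    (hB₁₁ : B₁₁.PosSemidef) (hB₁₂ : B₁₂.PosSemidef)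
    (hB₂₁ : B₂₁.PosSemidef) (hB₂₂ : B₂₂.PosSemidef)
    (hA₁₁t : A₁₁.trace = 1) (hA₁₂t : A₁₂.trace = 1)
    (hA₂₁t : A₂₁.trace = 1) (hA₂₂t : A₂₂.trace = 1)
    (hB₁₁t : B₁₁.trace = 1) (hB₁₂t : B₁₂.trace = 1)
    (hB₂₁t : B₂₁.trace = 1) (hB₂₂t : B₂₂.trace = 1)
    (tA₁₂ tB₁₂ tA₂₁ tB₂₁ : Matrix (Fin n) (Fin n) ℂ)
    (htA₁₂ : tA₁₂ = ((m₁₁ + m₁₂)⁻¹ : ℝ) • (m₁₁ • A₁₁ + m₁₂ • A₁₂))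
    (htB₁₂ : tB₁₂ = ((m₁₁ + m₁₂)⁻¹ : ℝ) • (m₁₁ • B₂₂ + m₁₂ • B₁₂))
    (htA₂₁ : tA₂₁ = ((m₁₁ + m₂₁)⁻¹ : ℝ) • (m₁₁ • A₂₂ + m₂₁ • A₂₁))
    (htB₂₁ : tB₂₁ = ((m₁₁ + m₂₁)⁻¹ : ℝ) • (m₁₁ • B₁₁ + m₂₁ • B₂₁)) :
    ((m₁₁ + m₁₂) • tA₁₂ = m₁₁ • A₁₁ + m₁₂ • A₁₂ ∧
     (m₁₁ + m₂₁) • tA₂₁ = m₁₁ • A₂₂ + m₂₁ • A₂₁ ∧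
     (m₁₁ + m₂₁) • tB₂₁ = m₁₁ • B₁₁ + m₂₁ • B₂₁ ∧
     (m₁₁ + m₁₂) • tB₁₂ + (m₂₂ - m₁₁) • B₂₂ = m₁₂ • B₁₂ + m₂₂ • B₂₂) ∧
    (m₁₁ * ((x₁ - y₁) ^ 2 + lam * frobSq (A₁₁ - B₁₁)) +
       m₁₂ * ((x₁ - y₂) ^ 2 + lam * frobSq (A₁₂ - B₁₂)) +
       m₂₁ * ((x₂ - y₁) ^ 2 + lam * frobSq (A₂₁ - B₂₁)) +
       m₂₂ * ((x₂ - y₂) ^ 2 + lam * frobSq (A₂₂ - B₂₂)) >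
     (m₁₁ + m₁₂) * ((x₁ - y₂) ^ 2 + lam * frobSq (tA₁₂ - tB₁₂)) +
       (m₁₁ + m₂₁) * ((x₂ - y₁) ^ 2 + lam * frobSq (tA₂₁ - tB₂₁)) +
       (m₂₂ - m₁₁) * ((x₂ - y₂) ^ 2 + lam * frobSq (A₂₂ - B₂₂))) :=
  matrix_rearrangement_reduces_cost_general lam hlam x₁ x₂ y₁ y₂ h m₁₁ m₁₂ m₂₁ m₂₂ hm₁₁ hm₁₂ hm₂₁
    A₁₁ A₁₂ A₂₁ A₂₂ B₁₁ B₁₂ B₂₁ B₂₂ hA₁₁ hA₂₂ hB₁₁ hB₂₂ hA₁₁t hA₂₂t hB₁₁t hB₂₂t tA₁₂ tB₁₂ tA₂₁ tB₂₁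
    htA₁₂ htB₁₂ htA₂₁ htB₂₁
end
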